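/- Let $k$ be a local field, $\mathcal{M}$ a topological monoid, and $(V, \rho)$ a finite dimensional strictly Cartesian unitary representation of $\mathcal{M}$ over $k$. Let $\mathcal{A}$ be the closure of the image of $k[\mathcal{M}]$ in the Banach algebra $\mathrm{B}_k(V)$ of continuous endomorphisms with the operator norm. If $\overline{\mathcal{A}} = \mathcal{A}(1)/\mathcal{A}(1-)$ is a semisimple $\bar{k}$-algebra, then $V$ is a semisimple representation of $\mathcal{M}$, i.e. $V$ decomposes as a direct sum of irreducible subrepresentations. -/

import Mathlib

/-!
Let `𝒜 = opAlg ρ`. As `V` is finite dimensional, `𝒜` is a finite-dimensional `k`-algebra, hence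
Artinian, and it suffices to show that its Jacobson radical vanishes: then `𝒜` is semisimple, so
is the `𝒜`-module `V`, and its simple `𝒜`-submodules are the irreducible subrepresentations, since
`ρ`-stable subspaces are closed and `𝒜` is the closure of the algebra generated by `ρ(ℳ)`.

Over a discretely valued field the operator norm on a strictly Cartesian space takes its values
in `|k|`, so a nonzero element of the radical can be rescaled to norm `1`. The radical of an
Artinian ring is nilpotent, so the image of that element in `𝒜(1)/𝒜(1-)` only has nilpotent left
multiples; it therefore lies in the radical of the semisimple residue algebra, which is zero,
contradicting norm `1`.
-/

instance instSubtypeUltrametric {α : Type*} [PseudoMetricSpace α] [IsUltrametricDist α]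
    {p : α → Prop} : IsUltrametricDist (Subtype p) :=
  ⟨fun x y z => IsUltrametricDist.dist_triangle_max x.1 y.1 z.1⟩

/-- The closed unit ball of an ultrametric normed ring, as a subring. -/
def unitBall (A : Type*) [NormedRing A] [NormOneClass A] [IsUltrametricDist A] : Subring A where
  carrier := {a | ‖a‖ ≤ 1}
  mul_mem' {a b} ha hb := le_trans (norm_mul_le a b) (mul_le_one₀ ha (norm_nonneg b) hb)
  one_mem' := le_of_eq norm_one
  add_mem' {a b} ha hb := le_trans (IsUltrametricDist.norm_add_le_max a b) (max_le ha hb)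
  zero_mem' := by simp
  neg_mem' {a} ha := by simpa using ha

/-- The congruence relation on the unit ball identifying elements whose difference has
norm `< 1`. -/
def redCon (A : Type*) [NormedRing A] [NormOneClass A] [IsUltrametricDist A] :
    RingCon (unitBall A) where
  r a b := ‖(a : A) - (b : A)‖ < 1
  iseqv := by
    refine ⟨fun a => by simp, fun {a b} h => ?_, fun {a b c} h1 h2 => ?_⟩
    · rwa [norm_sub_rev]
    · have : (a : A) - c = ((a : A) - b) + ((b : A) - c) := by abel
      rw [this]
      exact lt_of_le_of_lt (IsUltrametricDist.norm_add_le_max _ _) (max_lt h1 h2)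
  mul' {w x y z} h1 h2 := by
    have key : ((w * y : unitBall A) : A) - ((x * z : unitBall A) : A)
        = (w : A) * ((y : A) - (z : A)) + ((w : A) - (x : A)) * (z : A) := by
      push_cast; rw [mul_sub, sub_mul]; abel
    show ‖((w * y : unitBall A) : A) - ((x * z : unitBall A) : A)‖ < 1
    rw [key]
    refine lt_of_le_of_lt (IsUltrametricDist.norm_add_le_max _ _) (max_lt ?_ ?_)
    · exact lt_of_le_of_lt (norm_mul_le _ _)
        (lt_of_le_of_lt (mul_le_of_le_one_left (norm_nonneg _) w.2) h2)
    · exact lt_of_le_of_lt (norm_mul_le _ _)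
        (lt_of_le_of_lt (mul_le_of_le_one_right (norm_nonneg _) z.2) h1)
  add' {w x y z} h1 h2 := by
    have key : ((w + y : unitBall A) : A) - ((x + z : unitBall A) : A)
        = ((w : A) - (x : A)) + ((y : A) - (z : A)) := by push_cast; abel
    show ‖((w + y : unitBall A) : A) - ((x + z : unitBall A) : A)‖ < 1
    rw [key]
    exact lt_of_le_of_lt (IsUltrametricDist.norm_add_le_max _ _) (max_lt h1 h2)

/-- The residue ring `𝒜(1)/𝒜(1-)` of an ultrametric normed ring. -/
abbrev Red (A : Type*) [NormedRing A] [NormOneClass A] [IsUltrametricDist A] : Type _ :=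
  (redCon A).Quotient


section Rep

variable {k V : Type*} [NontriviallyNormedField k] [CompleteSpace k] [IsUltrametricDist k]
  [NormedAddCommGroup V] [NormedSpace k V] [IsUltrametricDist V] [Nontrivial V]

instance instUltrametricCLM : IsUltrametricDist (V →L[k] V) := by
  apply IsUltrametricDist.isUltrametricDist_of_isNonarchimedean_norm
  intro f g
  refine ContinuousLinearMap.opNorm_le_bound _ (le_max_of_le_left (norm_nonneg f)) fun x => ?_
  calc ‖(f + g) x‖ = ‖f x + g x‖ := rfl
    _ ≤ max ‖f x‖ ‖g x‖ := IsUltrametricDist.norm_add_le_max _ _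
    _ ≤ max (‖f‖ * ‖x‖) (‖g‖ * ‖x‖) := max_le_max (f.le_opNorm x) (g.le_opNorm x)
    _ = max ‖f‖ ‖g‖ * ‖x‖ := (max_mul_of_nonneg _ _ (norm_nonneg x)).symm

noncomputable instance instNormOneClassSubalgebraCLM (S : Subalgebra k (V →L[k] V)) :
    NormOneClass S :=
  ⟨show ‖(1 : V →L[k] V)‖ = 1 from norm_one⟩

/-- The operator algebra of a unitary representation `ρ`: the closure of the image of
`k[ℳ]`, i.e. the topological closure of the `k`-subalgebra generated by the image of the
monoid `ℳ` in `B_k(V)`. -/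
noncomputable def opAlg {M : Type*} [Monoid M] (ρ : M →* (V →L[k] V)) :
    Subalgebra k (V →L[k] V) :=
  (Algebra.adjoin k (Set.range ρ)).topologicalClosure

end Rep

def IsStrictlyCartesian (k E : Type*) [Norm k] [Norm E] : Prop :=
  ∀ v : E, ∃ c : k, ‖v‖ = ‖c‖

section RingTheory

variable {R : Type*} [Ring R]

theorem mem_jacobson_of_forall_isNilpotent_mul {x : R} (h : ∀ r, IsNilpotent (r * x)) :
    x ∈ Ring.jacobson R := by
  rw [Ring.jacobson_eq_sInf_isMaximal]
  refine Submodule.mem_sInf.mpr fun m hm => ?_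
  by_contra hx
  obtain ⟨r, i, hi, hri⟩ := Ideal.IsMaximal.exists_inv hm hx
  rw [← eq_sub_iff_add_eq'] at hri
  exact hm.ne_top (Ideal.eq_top_of_isUnit_mem _ hi (hri ▸ (h r).isUnit_one_sub))

theorem IsSemiprimaryRing.isNilpotent_of_mem_jacobson [IsSemiprimaryRing R] {x : R}
    (hx : x ∈ Ring.jacobson R) : IsNilpotent x := by
  obtain ⟨n, hn⟩ := IsSemiprimaryRing.isNilpotent (R := R)
  exact ⟨n, by simpa [hn] using Ideal.pow_mem_pow hx n⟩

end RingTheory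

section Reduction

variable {A : Type*} [NormedRing A] [NormOneClass A] [IsUltrametricDist A]

theorem Red.coe_eq_zero_iff (a : unitBall A) : (a : Red A) = 0 ↔ ‖(a : A)‖ < 1 := by
  rw [← RingCon.coe_zero, RingCon.eq]
  show ‖(a : A) - 0‖ < 1 ↔ _
  rw [sub_zero]

theorem norm_lt_one_of_mem_jacobson [IsSemiprimaryRing A] [IsSemisimpleRing (Red A)] {y : A}
    (hy : y ∈ Ring.jacobson A) (hy1 : ‖y‖ ≤ 1) : ‖y‖ < 1 := by
  let y' : unitBall A := ⟨y, hy1⟩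
  have hmem : (y' : Red A) ∈ Ring.jacobson (Red A) := by
    refine mem_jacobson_of_forall_isNilpotent_mul fun r => ?_
    obtain ⟨r, rfl⟩ := (redCon A).mk'_surjective r
    have hnil : IsNilpotent (r * y') :=
      (IsNilpotent.map_iff (f := (unitBall A).subtype) Subtype.val_injective).mp
        (IsSemiprimaryRing.isNilpotent_of_mem_jacobson (Ideal.mul_mem_left _ _ hy))
    exact hnil.map (redCon A).mk'
  rw [IsSemisimpleRing.jacobson_eq_bot, Submodule.mem_bot] at hmem
  exact (Red.coe_eq_zero_iff y').mp hmem

theorem isSemisimpleRing_of_isSemisimpleRing_red {k : Type*} [NormedField k] [NormedAlgebra k A]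
    [IsArtinianRing A] [IsSemisimpleRing (Red A)] (hA : IsStrictlyCartesian k A) :
    IsSemisimpleRing A := by
  rw [IsArtinianRing.isSemisimpleRing_iff_jacobson, eq_bot_iff]
  intro x hx
  rw [Submodule.mem_bot]
  by_contra hx0
  obtain ⟨c, hc⟩ := hA x
  have hnorm : ‖c⁻¹ • x‖ = 1 := by
    rw [norm_smul, norm_inv, ← hc, inv_mul_cancel₀ (norm_ne_zero_iff.mpr hx0)]
  have hmem : c⁻¹ • x ∈ Ring.jacobson A := by
    rw [Algebra.smul_def]
    exact Ideal.mul_mem_left _ _ hx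
  exact (norm_lt_one_of_mem_jacobson hmem hnorm.le).ne hnorm

end Reduction

theorem zpow_le_zpow_add_one_of_zpow_lt {α : Type*} [Field α] [LinearOrder α]
    [IsStrictOrderedRing α] {r : α} (h0 : 0 < r) (h1 : r < 1) {a b : ℤ}
    (h : r ^ a < r ^ b) : r ^ a ≤ r ^ (b + 1) :=
  zpow_le_zpow_right_of_le_one₀ h0 h1.le ((zpow_lt_zpow_iff_right_of_lt_one₀ h0 h1).mp h)

theorem IsStrictlyCartesian.exists_norm_eq_zpow {k E : Type*} [NormedField k]
    [NormedAddCommGroup E] {ϖ : k} (hdisc : ∀ x : k, x ≠ 0 → ∃ n : ℤ, ‖x‖ = ‖ϖ‖ ^ n)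
    (hE : IsStrictlyCartesian k E) {v : E} (hv : v ≠ 0) : ∃ n : ℤ, ‖v‖ = ‖ϖ‖ ^ n := by
  obtain ⟨c, hc⟩ := hE v
  obtain ⟨n, hn⟩ := hdisc c (norm_ne_zero_iff.mp (hc ▸ norm_ne_zero_iff.mpr hv))
  exact ⟨n, hc.trans hn⟩

theorem IsStrictlyCartesian.continuousLinearMap {k E F : Type*} [NontriviallyNormedField k]
    [NormedAddCommGroup E] [NormedSpace k E] [NormedAddCommGroup F] [NormedSpace k F] {ϖ : k}
    (hϖ0 : 0 < ‖ϖ‖) (hϖ1 : ‖ϖ‖ < 1)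
    (hdisc : ∀ x : k, x ≠ 0 → ∃ n : ℤ, ‖x‖ = ‖ϖ‖ ^ n)
    (hE : IsStrictlyCartesian k E) (hF : IsStrictlyCartesian k F) :
    IsStrictlyCartesian k (E →L[k] F) := by
  intro f
  rcases eq_or_ne f 0 with rfl | hf
  · exact ⟨0, by simp⟩
  set r := ‖ϖ‖
  obtain ⟨m, hm_lt, hm_le⟩ : ∃ m : ℤ, r ^ (m + 1) < ‖f‖ ∧ ‖f‖ ≤ r ^ m := by
    obtain ⟨m, h_le, h_lt⟩ := exists_mem_Ico_zpow (inv_pos.mpr (norm_pos_iff.mpr hf))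
      (one_lt_inv₀ hϖ0 |>.mpr hϖ1)
    rw [inv_zpow, inv_le_inv₀ (zpow_pos hϖ0 _) (norm_pos_iff.mpr hf)] at h_le
    rw [inv_zpow, inv_lt_inv₀ (norm_pos_iff.mpr hf) (zpow_pos hϖ0 _)] at h_lt
    exact ⟨m, h_lt, h_le⟩
  refine ⟨ϖ ^ m, (norm_zpow ϖ m).symm ▸ le_antisymm hm_le ?_⟩
  by_contra! hlt
  -- every ratio `‖f v‖ / ‖v‖` is a power of `r` below `r ^ m`, hence at most `r ^ (m + 1)`
  have hbound : ∀ v, ‖f v‖ ≤ r ^ (m + 1) * ‖v‖ := by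
    intro v
    rcases eq_or_ne (f v) 0 with hfv | hfv
    · rw [hfv, norm_zero]
      positivity
    have hv : v ≠ 0 := by rintro rfl; exact hfv (map_zero f)
    obtain ⟨a, ha⟩ := hF.exists_norm_eq_zpow hdisc hfv
    obtain ⟨b, hb⟩ := hE.exists_norm_eq_zpow hdisc hv
    have hab : r ^ a < r ^ (m + b) := calc
      r ^ a = ‖f v‖ := ha.symm
      _ ≤ ‖f‖ * ‖v‖ := f.le_opNorm v
      _ < r ^ m * ‖v‖ := mul_lt_mul_of_pos_right hlt (norm_pos_iff.mpr hv)
      _ = r ^ (m + b) := by rw [hb, zpow_add₀ hϖ0.ne']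
    calc ‖f v‖ = r ^ a := ha
      _ ≤ r ^ (m + b + 1) := zpow_le_zpow_add_one_of_zpow_lt hϖ0 hϖ1 hab
      _ = r ^ (m + 1) * ‖v‖ := by rw [hb, ← zpow_add₀ hϖ0.ne']; ring_nf
  exact (f.opNorm_le_bound (by positivity) hbound).not_gt hm_lt

theorem IsSemisimpleModule.exists_fin_iSupIndep_isAtom (R M : Type*) [Ring R] [AddCommGroup M]
    [Module R M] [IsSemisimpleModule R M] [IsArtinian R M] :
    ∃ (n : ℕ) (S : Fin n → Submodule R M), iSupIndep S ∧ iSup S = ⊤ ∧ ∀ i, IsAtom (S i) := by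
  obtain ⟨s, hind, hsup, hsimple⟩ := IsSemisimpleModule.exists_sSupIndep_sSup_simples_eq_top R M
  have := (WellFoundedLT.finite_of_sSupIndep hind).to_subtype
  obtain ⟨n, ⟨e⟩⟩ := Finite.exists_equiv_fin s
  refine ⟨n, fun i => e.symm i, (sSupIndep_iff s).mp hind |>.comp e.symm.injective, ?_,
    fun i => isSimpleModule_iff_isAtom.mp (hsimple _ (e.symm i).2)⟩
  rw [e.symm.iSup_comp (g := fun x : s => (x : Submodule R M)), ← sSup_eq_iSup', hsup]

theorem iSupIndep.restrictScalars {S R M ι : Type*} [Semiring S] [Semiring R] [AddCommMonoid M]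
    [Module S M] [Module R M] [SMul S R] [IsScalarTower S R M] {N : ι → Submodule R M}
    (hN : iSupIndep N) : iSupIndep fun i => (N i).restrictScalars S := by
  intro i
  simp only [← Submodule.restrictScalars_iSup, Submodule.disjoint_restrictScalars_iff]
  exact hN i

section Representation

variable {k V : Type*} [NontriviallyNormedField k] [NormedAddCommGroup V] [NormedSpace k V]

instance ContinuousLinearMap.isScalarTower_apply : IsScalarTower k (V →L[k] V) V :=
  ⟨fun _ _ _ => rfl⟩

def Submodule.stabilizerCLM (W : Submodule k V) : Subalgebra k (V →L[k] V) where
  carrier := {a | Set.MapsTo a W W}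
  mul_mem' ha hb := ha.comp hb
  one_mem' := Set.mapsTo_id _
  add_mem' ha hb _ hv := W.add_mem (ha hv) (hb hv)
  zero_mem' _ _ := W.zero_mem
  algebraMap_mem' c _ hv := W.smul_mem c hv

variable [IsUltrametricDist V] {M : Type*} [Monoid M] (ρ : M →* (V →L[k] V))

theorem mem_opAlg (m : M) : ρ m ∈ opAlg ρ :=
  Subalgebra.le_topologicalClosure _ (Algebra.subset_adjoin ⟨m, rfl⟩)

theorem opAlg_le_stabilizerCLM {W : Submodule k V} (hW : IsClosed (W : Set V))
    (hρW : ∀ m : M, ∀ v ∈ W, ρ m v ∈ W) : opAlg ρ ≤ W.stabilizerCLM :=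
  Subalgebra.topologicalClosure_minimal
    (Algebra.adjoin_le (Set.range_subset_iff.mpr fun m ⦃v⦄ hv => hρW m v hv))
    (hW.setOfPred_mapsTo fun v _ => (ContinuousLinearMap.apply k V v).continuous)

theorem exists_restrictScalars_eq_of_isClosed {W : Submodule k V} (hW : IsClosed (W : Set V))
    (hρW : ∀ m : M, ∀ v ∈ W, ρ m v ∈ W) :
    ∃ N : Submodule (opAlg ρ) V, N.restrictScalars k = W :=
  ⟨{ W with smul_mem' := fun a _ hv => opAlg_le_stabilizerCLM ρ hW hρW a.2 hv }, rfl⟩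

theorem isIrreducible_restrictScalars_of_isAtom [CompleteSpace k] [FiniteDimensional k V]
    {N : Submodule (opAlg ρ) V} (hN : IsAtom N) :
    N.restrictScalars k ≠ ⊥ ∧ ∀ W : Submodule k V, W ≤ N.restrictScalars k →
      (∀ m : M, ∀ v ∈ W, ρ m v ∈ W) → W = ⊥ ∨ W = N.restrictScalars k := by
  refine ⟨by simpa using hN.ne_bot, fun W hWN hρW => ?_⟩
  obtain ⟨N', rfl⟩ := exists_restrictScalars_eq_of_isClosed ρ W.closed_of_finiteDimensional hρW
  rcases hN.le_iff.mp hWN with rfl | rfl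
  · exact Or.inl (Submodule.restrictScalars_bot _ _ _)
  · exact Or.inr rfl

end Representation

theorem semisimple_rep_of_semisimple_reduction_general {k M V : Type*}
    [NontriviallyNormedField k] [CompleteSpace k]
    (ϖ : k) (hϖ0 : 0 < ‖ϖ‖) (hϖ1 : ‖ϖ‖ < 1)
    (hdisc : ∀ x : k, x ≠ 0 → ∃ n : ℤ, ‖x‖ = ‖ϖ‖ ^ n)
    [Monoid M]
    [NormedAddCommGroup V] [NormedSpace k V] [Nontrivial V]
    [FiniteDimensional k V] [IsUltrametricDist V]
    (ρ : M →* (V →L[k] V))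
    (hcart : ∀ v : V, ∃ c : k, ‖v‖ = ‖c‖)
    (hss : IsSemisimpleRing (Red (opAlg ρ))) :
    ∃ (ι : Type) (W : ι → Submodule k V),
      (∀ i, ∀ m : M, ∀ v ∈ W i, ρ m v ∈ W i) ∧
      (∀ i, W i ≠ ⊥ ∧ ∀ W' : Submodule k V, W' ≤ W i →
        (∀ m : M, ∀ v ∈ W', ρ m v ∈ W') → W' = ⊥ ∨ W' = W i) ∧
      iSupIndep W ∧ iSup W = ⊤ := by
  have hA : IsStrictlyCartesian k (opAlg ρ) := fun a =>
    IsStrictlyCartesian.continuousLinearMap hϖ0 hϖ1 hdisc hcart hcart a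
  have : IsArtinianRing (opAlg ρ) := IsArtinianRing.of_finite k _
  have : IsSemisimpleRing (opAlg ρ) := isSemisimpleRing_of_isSemisimpleRing_red hA
  have : IsArtinian (opAlg ρ) V := isArtinian_of_tower k inferInstance
  obtain ⟨n, S, hind, hsup, hatom⟩ :=
    IsSemisimpleModule.exists_fin_iSupIndep_isAtom (opAlg ρ) V
  refine ⟨Fin n, fun i => (S i).restrictScalars k,
    fun i m _ hv => (S i).smul_mem ⟨ρ m, mem_opAlg ρ m⟩ hv,
    fun i => isIrreducible_restrictScalars_of_isAtom ρ (hatom i), hind.restrictScalars, ?_⟩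
  rw [← Submodule.restrictScalars_iSup, hsup, Submodule.restrictScalars_top]

/-- Criterion for semisimplicity of a unitary representation: let `k` be a local field,
`ℳ` a topological monoid and `(V, ρ)` a finite dimensional strictly Cartesian unitary
representation of `ℳ` over `k`. Let `𝒜` be the closure of the image of `k[ℳ]` in
`B_k(V)`. If the residue algebra `𝒜(1)/𝒜(1-)` is semisimple, then `V` decomposes as a
direct sum of irreducible subrepresentations of `ℳ`. -/
theorem semisimple_rep_of_semisimple_reduction {k M V : Type*}
    [NontriviallyNormedField k] [CompleteSpace k] [IsUltrametricDist k] [ProperSpace k]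
    (ϖ : k) (hϖ0 : 0 < ‖ϖ‖) (hϖ1 : ‖ϖ‖ < 1)
    (hdisc : ∀ x : k, x ≠ 0 → ∃ n : ℤ, ‖x‖ = ‖ϖ‖ ^ n)
    [Monoid M] [TopologicalSpace M] [ContinuousMul M]
    [NormedAddCommGroup V] [NormedSpace k V] [CompleteSpace V] [Nontrivial V]
    [FiniteDimensional k V] [IsUltrametricDist V]
    (ρ : M →* (V →L[k] V)) (hunit : ∀ m : M, ‖ρ m‖ ≤ 1)
    (hcont : Continuous fun p : M × V => ρ p.1 p.2)
    (hcart : ∀ v : V, ∃ c : k, ‖v‖ = ‖c‖)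
    (hss : IsSemisimpleRing (Red (opAlg ρ))) :
    ∃ (ι : Type) (W : ι → Submodule k V),
      (∀ i, ∀ m : M, ∀ v ∈ W i, ρ m v ∈ W i) ∧
      (∀ i, W i ≠ ⊥ ∧ ∀ W' : Submodule k V, W' ≤ W i →
        (∀ m : M, ∀ v ∈ W', ρ m v ∈ W') → W' = ⊥ ∨ W' = W i) ∧
      iSupIndep W ∧ iSup W = ⊤ :=
  semisimple_rep_of_semisimple_reduction_general ϖ hϖ0 hϖ1 hdisc ρ hcart hss
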